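/- Operator-valued Fejér–Egerváry–Szász inequality: Let m ≥ 2 and let A_0, A_1, …, A_{m−1} be bounded linear operators on a complex Hilbert space H such that for every θ ∈ ℝ the operator Σ_{k=1}^{m−1} e^{−ikθ} A_k^* + A_0 + Σ_{k=1}^{m−1} e^{ikθ} A_k is positive. Then for each 1 ≤ k ≤ m−1, the numerical radius satisfies ω(A_k) ≤ ‖A_0‖ · cos(π/(⌊(m−1)/k⌋ + 2)), where ⌊x⌋ denotes the integer part of x. -/

import Mathlib

open Complex Finset

noncomputable section

lemma geom_exp_sum (M : ℕ) (hM : 0 < M) (j : ℤ) :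
    ∑ s ∈ Finset.range M, Complex.exp (2 * Real.pi * Complex.I * j * s / M) =
      if (M:ℤ) ∣ j then (M:ℂ) else 0 := by
  have hMC : (M:ℂ) ≠ 0 := Nat.cast_ne_zero.2 hM.ne'
  have hterm : ∀ s : ℕ, Complex.exp (2 * Real.pi * Complex.I * j * s / M)
      = (Complex.exp (2 * Real.pi * Complex.I * j / M)) ^ s := by
    intro s
    rw [← Complex.exp_nat_mul]
    ring_nf
  simp only [hterm]
  by_cases hdvd : (M:ℤ) ∣ j
  · obtain ⟨t, rfl⟩ := hdvd
    have : Complex.exp (2 * Real.pi * Complex.I * ((M:ℤ)*t) / M) = 1 := by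
      have := Complex.exp_int_mul_two_pi_mul_I t
      rw [← this]
      congr 1
      push_cast
      field_simp
    push_cast at this ⊢
    simp [this, Dvd.intro t rfl]
  · have hne : Complex.exp (2 * Real.pi * Complex.I * j / M) ≠ 1 := by
      rw [Ne, Complex.exp_eq_one_iff]
      rintro ⟨t, ht⟩
      apply hdvd
      have : (j:ℂ) = M * t := by
        field_simp at ht
        have h2 : (2 * Real.pi * Complex.I) ≠ 0 := by
          simp [Real.pi_ne_zero, Complex.I_ne_zero, Complex.ofReal_ne_zero]
        -- ht : 2 * π * I * j = t * (2 * π * I) * M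
        have := ht
        calc (j:ℂ) = (2 * Real.pi * Complex.I * j) / (2 * Real.pi * Complex.I) := by
              field_simp
          _ = (t * (2 * Real.pi * Complex.I) * M) / (2 * Real.pi * Complex.I) := by rw [ht]; ring
          _ = M * t := by field_simp
      exact ⟨t, by exact_mod_cast this⟩
    rw [geom_sum_eq hne]
    have : Complex.exp (2 * Real.pi * Complex.I * j / M) ^ M = 1 := by
      rw [← Complex.exp_nat_mul]
      have := Complex.exp_int_mul_two_pi_mul_I j
      rw [← this]
      congr 1
      push_cast
      field_simp
    rw [this]
    simp [hdvd]

lemma weighted_geom (N : ℕ) (hN : 3 ≤ N) (δ : ℝ) (l : ℤ) :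
    ∑ s ∈ Finset.range N,
      (((Real.cos (Real.pi/N) + Real.cos (2*Real.pi*s/N + δ)) / N : ℝ) : ℂ)
        * Complex.exp (2*Real.pi*Complex.I*l*s/N)
    = (if (N:ℤ) ∣ l then ((Real.cos (Real.pi/N) : ℝ) : ℂ) else 0)
      + (if (N:ℤ) ∣ (l+1) then Complex.exp (Complex.I*δ)/2 else 0)
      + (if (N:ℤ) ∣ (l-1) then Complex.exp (-(Complex.I*δ))/2 else 0) := by
  have hN0 : 0 < N := by omega
  have hNC : (N:ℂ) ≠ 0 := Nat.cast_ne_zero.2 hN0.ne'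
  have hterm : ∀ s ∈ Finset.range N,
      (((Real.cos (Real.pi/N) + Real.cos (2*Real.pi*s/N + δ)) / N : ℝ) : ℂ)
        * Complex.exp (2*Real.pi*Complex.I*l*s/N)
      = ((Real.cos (Real.pi/N) : ℝ) : ℂ)/N * Complex.exp (2*Real.pi*Complex.I*l*s/N)
        + (Complex.exp (Complex.I*δ)/(2*N)) * Complex.exp (2*Real.pi*Complex.I*(l+1)*s/N)
        + (Complex.exp (-(Complex.I*δ))/(2*N)) * Complex.exp (2*Real.pi*Complex.I*(l-1)*s/N) := by
    intro s _
    have hcos : ((Real.cos (2*Real.pi*s/N + δ) : ℝ) : ℂ)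
        = (Complex.exp (((2*Real.pi*s/N + δ : ℝ) : ℂ)*Complex.I)
            + Complex.exp (-(((2*Real.pi*s/N + δ : ℝ) : ℂ))*Complex.I))/2 := by
      rw [Complex.ofReal_cos]
      linear_combination (Complex.two_cos (((2*Real.pi*s/N + δ : ℝ) : ℂ)))/2
    have h1 : Complex.exp (((2*Real.pi*s/N + δ : ℝ) : ℂ)*Complex.I)
          * Complex.exp (2*Real.pi*Complex.I*l*s/N)
        = Complex.exp (Complex.I*δ) * Complex.exp (2*Real.pi*Complex.I*(l+1)*s/N) := by
      rw [← Complex.exp_add, ← Complex.exp_add]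
      congr 1
      push_cast
      ring
    have h2 : Complex.exp (-(((2*Real.pi*s/N + δ : ℝ) : ℂ))*Complex.I)
          * Complex.exp (2*Real.pi*Complex.I*l*s/N)
        = Complex.exp (-(Complex.I*δ)) * Complex.exp (2*Real.pi*Complex.I*(l-1)*s/N) := by
      rw [← Complex.exp_add, ← Complex.exp_add]
      congr 1
      push_cast
      ring
    rw [Complex.ofReal_div, Complex.ofReal_add, hcos]
    push_cast at h1 h2 ⊢
    linear_combination h1/(2*(N:ℂ)) + h2/(2*(N:ℂ))
  rw [Finset.sum_congr rfl hterm]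
  rw [Finset.sum_add_distrib, Finset.sum_add_distrib, ← Finset.mul_sum, ← Finset.mul_sum,
    ← Finset.mul_sum]
  have ga := geom_exp_sum N hN0 l
  have gb := geom_exp_sum N hN0 (l+1)
  have gc := geom_exp_sum N hN0 (l-1)
  push_cast at ga gb gc
  rw [ga, gb, gc]
  congr 1
  · congr 1
    · split <;> field_simp <;> simp
    · split <;> field_simp <;> ring
  · split <;> field_simp <;> ring

lemma not_dvd_of_small {N : ℕ} (t : ℤ) (ht : t ≠ 0) (hlt : t.natAbs < N) : ¬ (N:ℤ) ∣ t := by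
  intro hdvd
  have h1 : N ∣ t.natAbs := by
    have := Int.natAbs_dvd_natAbs.mpr hdvd
    simpa using this
  have := Nat.le_of_dvd (Nat.pos_of_ne_zero (fun h => ht (Int.natAbs_eq_zero.mp h))) h1
  omega

lemma node_sum (N k : ℕ) (hN : 3 ≤ N) (hk : 0 < k) (δ φ : ℝ) (ε : ℤ) (hε : ε = 1 ∨ ε = -1)
    (d : ℕ) (hd1 : 1 ≤ d) (hdn : d / k ≤ N - 2) :
    ∑ s ∈ Finset.range N, ∑ r ∈ Finset.range k,
      ((((Real.cos (Real.pi/N) + Real.cos (2*Real.pi*s/N + δ)) / N : ℝ)):ℂ)/k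
        * Complex.exp ((ε:ℂ) * Complex.I * d *
            ((Real.pi + (2*Real.pi*s/N + δ) + φ + 2*Real.pi*r)/k : ℝ))
    = if d = k then -(Complex.exp ((ε:ℂ)*Complex.I*φ))/2 else 0 := by
  have hNC : (N:ℂ) ≠ 0 := Nat.cast_ne_zero.2 (by omega)
  have hkC : (k:ℂ) ≠ 0 := Nat.cast_ne_zero.2 hk.ne'
  have hinner : ∀ s : ℕ,
      ∑ r ∈ Finset.range k,
        ((((Real.cos (Real.pi/N) + Real.cos (2*Real.pi*s/N + δ)) / N : ℝ)):ℂ)/k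
          * Complex.exp ((ε:ℂ) * Complex.I * d *
              ((Real.pi + (2*Real.pi*s/N + δ) + φ + 2*Real.pi*r)/k : ℝ))
      = (((((Real.cos (Real.pi/N) + Real.cos (2*Real.pi*s/N + δ)) / N : ℝ)):ℂ)/k
          * Complex.exp ((ε:ℂ) * Complex.I * d *
              ((Real.pi + (2*Real.pi*s/N + δ) + φ : ℝ))/k))
          * (if (k:ℤ) ∣ ε*d then (k:ℂ) else 0) := by
    intro s
    have hsplit : ∀ r : ℕ,
        ((((Real.cos (Real.pi/N) + Real.cos (2*Real.pi*s/N + δ)) / N : ℝ)):ℂ)/k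
        * Complex.exp ((ε:ℂ) * Complex.I * d *
            ((Real.pi + (2*Real.pi*s/N + δ) + φ + 2*Real.pi*r)/k : ℝ))
        = (((((Real.cos (Real.pi/N) + Real.cos (2*Real.pi*s/N + δ)) / N : ℝ)):ℂ)/k
          * Complex.exp ((ε:ℂ) * Complex.I * d *
            ((Real.pi + (2*Real.pi*s/N + δ) + φ : ℝ))/k))
          * Complex.exp (2 * Real.pi * Complex.I * ((ε*d : ℤ)) * r / k) := by
      intro r
      have harg : (ε:ℂ) * Complex.I * d *
            (((Real.pi + (2*Real.pi*s/N + δ) + φ + 2*Real.pi*r)/k : ℝ) : ℂ)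
          = (ε:ℂ) * Complex.I * d * (((Real.pi + (2*Real.pi*s/N + δ) + φ : ℝ)):ℂ)/k
            + 2 * Real.pi * Complex.I * ((ε*d : ℤ)) * r / k := by
        push_cast
        ring
      rw [harg, Complex.exp_add]
      ring
    rw [Finset.sum_congr rfl (fun r _ => hsplit r), ← Finset.mul_sum,
      geom_exp_sum k hk (ε*d)]
  rw [Finset.sum_congr rfl (fun s _ => hinner s)]
  by_cases hdvd : k ∣ d
  · obtain ⟨j, hj⟩ := hdvd
    have hjval : d / k = j := by rw [hj]; exact Nat.mul_div_cancel_left j hk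
    have hj1 : 1 ≤ j := by
      rcases Nat.eq_zero_or_pos j with h | h
      · subst h; simp at hj; omega
      · exact h
    have hjN : j ≤ N - 2 := by omega
    have hdvdZ : (k:ℤ) ∣ ε*d := ⟨ε*j, by rw [hj]; push_cast; ring⟩
    simp only [if_pos hdvdZ]
    have hstep : ∀ s : ℕ,
        (((((Real.cos (Real.pi/N) + Real.cos (2*Real.pi*s/N + δ)) / N : ℝ)):ℂ)/k
          * Complex.exp ((ε:ℂ) * Complex.I * d *
              ((Real.pi + (2*Real.pi*s/N + δ) + φ : ℝ))/k)) * (k:ℂ)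
        = Complex.exp ((ε:ℂ)*Complex.I*j*((Real.pi:ℂ) + φ + δ)) *
          (((((Real.cos (Real.pi/N) + Real.cos (2*Real.pi*s/N + δ)) / N : ℝ)):ℂ)
            * Complex.exp (2*Real.pi*Complex.I*((ε*j : ℤ))*s/N)) := by
      intro s
      have hexp : Complex.exp ((ε:ℂ) * Complex.I * d *
              ((Real.pi + (2*Real.pi*s/N + δ) + φ : ℝ))/k)
          = Complex.exp ((ε:ℂ)*Complex.I*j*((Real.pi:ℂ) + φ + δ))
            * Complex.exp (2*Real.pi*Complex.I*((ε*j : ℤ))*s/N) := by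
        rw [← Complex.exp_add]
        congr 1
        have hd : (d:ℂ) = (k:ℂ) * (j:ℂ) := by rw [hj]; push_cast; ring
        rw [hd]
        push_cast
        field_simp
        ring
      rw [hexp]
      field_simp
    rw [Finset.sum_congr rfl (fun s _ => hstep s), ← Finset.mul_sum,
      weighted_geom N hN δ (ε*j)]
    have hne0 : ¬ (N:ℤ) ∣ ε*j := by
      apply not_dvd_of_small
      · rcases hε with h | h <;> subst h <;> simp <;> omega
      · rcases hε with h | h <;> subst h <;> simp [Int.natAbs_mul] <;> omega
    rw [if_neg hne0]
    by_cases hj1' : j = 1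
    · subst hj1'
      have hdk : d = k := by omega
      rw [if_pos hdk]
      rcases hε with h | h <;> subst h
      · have h2 : ¬ (N:ℤ) ∣ ((1:ℤ)*(1:ℕ)+1) := by
          apply not_dvd_of_small
          · norm_num
          · simp; omega
        rw [if_neg h2, if_pos (by norm_num)]
        have key : Complex.exp (((1:ℤ):ℂ)*Complex.I*((1:ℕ):ℂ)*((Real.pi:ℂ) + φ + δ))
            * Complex.exp (-(Complex.I*(δ:ℂ)))
            = -Complex.exp (((1:ℤ):ℂ)*Complex.I*(φ:ℂ)) := by
          rw [← Complex.exp_add,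
            show (((1:ℤ):ℂ)*Complex.I*((1:ℕ):ℂ)*((Real.pi:ℂ) + φ + δ) + -(Complex.I*(δ:ℂ)))
              = (Real.pi:ℂ)*Complex.I + ((1:ℤ):ℂ)*Complex.I*(φ:ℂ) from by push_cast; ring,
            Complex.exp_add, Complex.exp_pi_mul_I]
          ring
        linear_combination key/2
      · have h2 : ¬ (N:ℤ) ∣ ((-1:ℤ)*(1:ℕ)-1) := by
          apply not_dvd_of_small
          · norm_num
          · simp; omega
        rw [if_neg h2, if_pos (by norm_num)]
        have key : Complex.exp (((-1:ℤ):ℂ)*Complex.I*((1:ℕ):ℂ)*((Real.pi:ℂ) + φ + δ))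
            * Complex.exp (Complex.I*(δ:ℂ))
            = -Complex.exp (((-1:ℤ):ℂ)*Complex.I*(φ:ℂ)) := by
          rw [← Complex.exp_add,
            show (((-1:ℤ):ℂ)*Complex.I*((1:ℕ):ℂ)*((Real.pi:ℂ) + φ + δ) + (Complex.I*(δ:ℂ)))
              = -((Real.pi:ℂ)*Complex.I) + ((-1:ℤ):ℂ)*Complex.I*(φ:ℂ) from by push_cast; ring,
            Complex.exp_add, Complex.exp_neg, Complex.exp_pi_mul_I]
          norm_num
        linear_combination key/2
    · have hd2 : 2*k ≤ d := by
        rw [hj]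
        calc 2*k = k*2 := by ring
          _ ≤ k*j := Nat.mul_le_mul_left k (by omega)
      have hdk : d ≠ k := by omega
      rw [if_neg hdk]
      have hp : ¬ (N:ℤ) ∣ (ε*j+1) := by
        apply not_dvd_of_small
        · rcases hε with h | h <;> subst h <;> simp <;> omega
        · rcases hε with h | h <;> subst h <;> simp <;> omega
      have hm : ¬ (N:ℤ) ∣ (ε*j-1) := by
        apply not_dvd_of_small
        · rcases hε with h | h <;> subst h <;> simp <;> omega
        · rcases hε with h | h <;> subst h <;> simp <;> omega
      rw [if_neg hp, if_neg hm]
      ring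
  · have hndvd : ¬ (k:ℤ) ∣ ε*d := by
      intro hc
      apply hdvd
      have : (k:ℤ) ∣ (d:ℤ) := by
        rcases hε with h | h <;> subst h <;> simpa using hc
      exact_mod_cast this
    simp only [if_neg hndvd]
    have hdk : d ≠ k := fun h => hdvd (h ▸ dvd_refl k)
    rw [if_neg hdk]
    simp

lemma cos_bound (N q : ℕ) (hN : 3 ≤ N) (hqN : q ≠ N) (hq2N : q ≤ 2*N - 1) :
    -Real.cos (Real.pi/N) ≤ Real.cos (Real.pi * q / N) := by
  have hN0 : (0:ℝ) < N := by positivity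
  have hcosbound : ∀ y : ℝ, Real.pi/N ≤ y → y ≤ Real.pi * ((N:ℝ)-1) / N →
      -Real.cos (Real.pi/N) ≤ Real.cos y := by
    intro y h1 h2
    have hpi : Real.pi * ((N:ℝ)-1) / N = Real.pi - Real.pi/N := by
      field_simp
    have h3 : Real.cos (Real.pi * ((N:ℝ)-1) / N) ≤ Real.cos y := by
      apply Real.cos_le_cos_of_nonneg_of_le_pi
      · have : (0:ℝ) ≤ Real.pi/N := by positivity
        linarith
      · rw [hpi]
        have : (0:ℝ) ≤ Real.pi/N := by positivity
        linarith
      · exact h2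
    rw [hpi, Real.cos_pi_sub] at h3
    linarith
  rcases Nat.eq_zero_or_pos q with h0 | h0
  · subst h0
    push_cast
    rw [mul_zero, zero_div, Real.cos_zero]
    linarith [Real.neg_one_le_cos (Real.pi/(N:ℝ))]
  rcases le_or_gt q N with h | h
  · have hq1 : q ≤ N - 1 := by omega
    apply hcosbound
    · rw [div_le_div_iff₀ hN0 hN0]
      have h1 : (1:ℝ) ≤ q := by exact_mod_cast h0
      nlinarith [mul_nonneg (mul_nonneg Real.pi_pos.le (sub_nonneg.2 h1)) hN0.le]
    · have hc : (q:ℝ) ≤ (N:ℝ) - 1 := by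
        have h2 : (q:ℝ) ≤ ((N-1 : ℕ):ℝ) := by exact_mod_cast hq1
        rw [Nat.cast_sub (by omega)] at h2
        push_cast at h2
        linarith
      gcongr
  · have hy : Real.pi * q / N = 2*Real.pi - Real.pi * (2*(N:ℝ) - q)/N := by
      field_simp; ring
    rw [hy, Real.cos_two_pi_sub]
    apply hcosbound
    · have hc : (1:ℝ) ≤ 2*(N:ℝ) - q := by
        have h2 : (q:ℝ) ≤ ((2*N-1 : ℕ):ℝ) := by exact_mod_cast hq2N
        rw [Nat.cast_sub (by omega)] at h2
        push_cast at h2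
        linarith
      rw [div_le_div_iff₀ hN0 hN0]
      nlinarith [mul_nonneg (mul_nonneg Real.pi_pos.le (sub_nonneg.2 hc)) hN0.le]
    · have hc : 2*(N:ℝ) - q ≤ (N:ℝ) - 1 := by
        have : (N:ℝ) + 1 ≤ q := by exact_mod_cast Nat.succ_le_of_lt h
        linarith
      gcongr

lemma scalar_fes (M : ℕ) (c : ℕ → ℂ)
    (hre : ∀ θ : ℝ, 0 ≤ (c 0 + ∑ d ∈ Finset.Icc 1 M,
      (Complex.exp (Complex.I*(d:ℂ)*(θ:ℂ)) * (starRingEnd ℂ) (c d)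
        + Complex.exp (-(Complex.I*(d:ℂ)*(θ:ℂ))) * c d)).re)
    (k : ℕ) (hk1 : 1 ≤ k) (hk2 : k ≤ M) :
    ‖c k‖ ≤ (c 0).re * Real.cos (Real.pi / (((M / k : ℕ) : ℝ) + 2)) := by
  have hk0 : 0 < k := hk1
  set n : ℕ := M / k with hn
  have hn1 : 1 ≤ n := (Nat.one_le_div_iff hk0).2 hk2
  set N : ℕ := n + 2 with hNdef
  have hN : 3 ≤ N := by omega
  have hN0 : (0:ℝ) < N := by positivity
  set δ : ℝ := if Even N then Real.pi/N else 0 with hδ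
  set φ : ℝ := (c k).arg with hφ
  set W : ℕ → ℝ := fun s => (Real.cos (Real.pi/N) + Real.cos (2*Real.pi*s/N + δ))/N with hW
  set Θ : ℕ → ℕ → ℝ := fun s r => (Real.pi + (2*Real.pi*s/N + δ) + φ + 2*Real.pi*r)/k with hΘ
  set F : ℝ → ℂ := fun θ => c 0 + ∑ d ∈ Finset.Icc 1 M,
      (Complex.exp (Complex.I*(d:ℂ)*(θ:ℂ)) * (starRingEnd ℂ) (c d)
        + Complex.exp (-(Complex.I*(d:ℂ)*(θ:ℂ))) * c d) with hF
  -- weights are nonnegative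
  have hWpos : ∀ s : ℕ, s < N → 0 ≤ W s := by
    intro s hs
    have he : ∃ e : ℕ, (2*s+e ≠ N) ∧ e ≤ 1 ∧ δ = Real.pi * e / N := by
      by_cases h : Even N
      · refine ⟨1, ?_, le_refl 1, by simp [hδ, h]⟩
        have h' : N % 2 = 0 := Nat.even_iff.mp h
        omega
      · refine ⟨0, ?_, by omega, by simp [hδ, h]⟩
        have h' : N % 2 = 1 := Nat.not_even_iff.mp h
        omega
    obtain ⟨e, hqN, he1, hδe⟩ := he
    have hx : 2*Real.pi*s/N + δ = Real.pi * ((2*s+e : ℕ) : ℝ) / N := by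
      rw [hδe]; push_cast; field_simp
    have := cos_bound N (2*s+e) hN hqN (by omega)
    simp only [hW, hx]
    have h0 : 0 ≤ Real.cos (Real.pi/N) + Real.cos (Real.pi * ((2*s+e : ℕ):ℝ) / N) := by
      linarith
    positivity
  -- the grand sum
  have hZ : ∑ s ∈ Finset.range N, ∑ r ∈ Finset.range k,
      ((W s : ℝ):ℂ)/k * F (Θ s r)
      = ((Real.cos (Real.pi/N) : ℝ):ℂ) * c 0 - ((‖c k‖ : ℝ):ℂ) := by
    have hkC : (k:ℂ) ≠ 0 := Nat.cast_ne_zero.2 hk0.ne'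
    have hNn2 : N - 2 = n := by omega
    -- polar facts
    have hpolar := Complex.norm_mul_exp_arg_mul_I (c k)
    have habs1 : c k * Complex.exp (-(Complex.I * (φ:ℂ))) = ((‖c k‖ : ℝ):ℂ) := by
      rw [hφ]
      nth_rewrite 1 [← hpolar]
      rw [mul_assoc, ← Complex.exp_add,
        show (((c k).arg:ℂ)*Complex.I + -(Complex.I*((c k).arg:ℂ))) = 0 from by ring,
        Complex.exp_zero, mul_one]
    have hconj : (starRingEnd ℂ) (c k)
        = ((‖c k‖ : ℝ):ℂ) * Complex.exp (-(Complex.I * (φ:ℂ))) := by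
      have h := congrArg (starRingEnd ℂ) hpolar
      rw [map_mul, Complex.conj_ofReal, ← Complex.exp_conj] at h
      rw [hφ, ← h]
      congr 1
      rw [map_mul, Complex.conj_ofReal, Complex.conj_I]
      ring
    have habs2 : (starRingEnd ℂ) (c k) * Complex.exp (Complex.I * (φ:ℂ))
        = ((‖c k‖ : ℝ):ℂ) := by
      rw [hconj, mul_assoc, ← Complex.exp_add,
        show (-(Complex.I*(φ:ℂ)) + Complex.I*(φ:ℂ)) = 0 from by ring,
        Complex.exp_zero, mul_one]
    -- sum of weights
    have hsumW : ∑ s ∈ Finset.range N, ((W s : ℝ):ℂ) = ((Real.cos (Real.pi/N) : ℝ):ℂ) := by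
      have h := weighted_geom N hN δ 0
      simp only [Int.cast_zero, mul_zero, zero_mul, zero_div, Complex.exp_zero, mul_one] at h
      rw [if_pos (dvd_zero _), if_neg, if_neg] at h
      · simp only [zero_add, add_zero] at h
        simp only [hW]
        exact h
      · exact not_dvd_of_small _ (by norm_num) (by simp; omega)
      · exact not_dvd_of_small _ (by norm_num) (by simp; omega)
    -- expansion
    have hexpand : ∀ s ∈ Finset.range N, ∀ r ∈ Finset.range k,
        ((W s : ℝ):ℂ)/k * F (Θ s r)
        = ((W s : ℝ):ℂ)/k * c 0
          + (∑ d ∈ Finset.Icc 1 M,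
            (((W s : ℝ):ℂ)/k * Complex.exp (Complex.I*(d:ℂ)*((Θ s r : ℝ):ℂ)))
                * (starRingEnd ℂ) (c d)
            + ∑ d ∈ Finset.Icc 1 M,
              (((W s : ℝ):ℂ)/k * Complex.exp (-(Complex.I*(d:ℂ)*((Θ s r : ℝ):ℂ))))
                * c d) := by
      intro s _ r _
      rw [hF]
      simp only []
      rw [mul_add, Finset.mul_sum, ← Finset.sum_add_distrib]
      congr 1
      apply Finset.sum_congr rfl
      intro d _
      ring
    rw [Finset.sum_congr rfl (fun s hs => Finset.sum_congr rfl (fun r hr => hexpand s hs r hr))]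
    have hsplitr : ∀ s ∈ Finset.range N,
        ∑ r ∈ Finset.range k, (((W s : ℝ):ℂ)/k * c 0
          + (∑ d ∈ Finset.Icc 1 M,
            (((W s : ℝ):ℂ)/k * Complex.exp (Complex.I*(d:ℂ)*((Θ s r : ℝ):ℂ)))
                * (starRingEnd ℂ) (c d)
            + ∑ d ∈ Finset.Icc 1 M,
              (((W s : ℝ):ℂ)/k * Complex.exp (-(Complex.I*(d:ℂ)*((Θ s r : ℝ):ℂ))))
                * c d))
        = (∑ r ∈ Finset.range k, ((W s : ℝ):ℂ)/k * c 0)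
          + ((∑ r ∈ Finset.range k, ∑ d ∈ Finset.Icc 1 M,
            (((W s : ℝ):ℂ)/k * Complex.exp (Complex.I*(d:ℂ)*((Θ s r : ℝ):ℂ)))
                * (starRingEnd ℂ) (c d))
            + ∑ r ∈ Finset.range k, ∑ d ∈ Finset.Icc 1 M,
              (((W s : ℝ):ℂ)/k * Complex.exp (-(Complex.I*(d:ℂ)*((Θ s r : ℝ):ℂ))))
                * c d) := by
      intro s _
      rw [Finset.sum_add_distrib, Finset.sum_add_distrib]
    rw [Finset.sum_congr rfl hsplitr, Finset.sum_add_distrib, Finset.sum_add_distrib]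
    -- part A
    have hpartA : ∑ s ∈ Finset.range N, ∑ r ∈ Finset.range k, ((W s : ℝ):ℂ)/k * c 0
        = ((Real.cos (Real.pi/N) : ℝ):ℂ) * c 0 := by
      have h9 : ∀ s ∈ Finset.range N, ∑ r ∈ Finset.range k, ((W s : ℝ):ℂ)/k * c 0
          = ((W s : ℝ):ℂ) * c 0 := by
        intro s _
        rw [Finset.sum_const, Finset.card_range, nsmul_eq_mul]
        field_simp
      rw [Finset.sum_congr rfl h9, ← Finset.sum_mul, hsumW]
    rw [hpartA]
    -- part B : swap sums
    have hswX : ∑ s ∈ Finset.range N, ∑ r ∈ Finset.range k, ∑ d ∈ Finset.Icc 1 M,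
          (((W s : ℝ):ℂ)/k * Complex.exp (Complex.I*(d:ℂ)*((Θ s r : ℝ):ℂ)))
                * (starRingEnd ℂ) (c d)
        = ∑ d ∈ Finset.Icc 1 M, (∑ s ∈ Finset.range N, ∑ r ∈ Finset.range k,
          ((W s : ℝ):ℂ)/k * Complex.exp (Complex.I*(d:ℂ)*((Θ s r : ℝ):ℂ)))
                * (starRingEnd ℂ) (c d) := by
      rw [Finset.sum_congr rfl (fun s (_ : s ∈ Finset.range N) => Finset.sum_comm), Finset.sum_comm]
      apply Finset.sum_congr rfl
      intro d _
      rw [Finset.sum_congr rfl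
        (fun s (_ : s ∈ Finset.range N) => (Finset.sum_mul (Finset.range k) _ _).symm),
        ← Finset.sum_mul]
    have hswY : ∑ s ∈ Finset.range N, ∑ r ∈ Finset.range k, ∑ d ∈ Finset.Icc 1 M,
          (((W s : ℝ):ℂ)/k * Complex.exp (-(Complex.I*(d:ℂ)*((Θ s r : ℝ):ℂ))))
                * c d
        = ∑ d ∈ Finset.Icc 1 M, (∑ s ∈ Finset.range N, ∑ r ∈ Finset.range k,
          ((W s : ℝ):ℂ)/k * Complex.exp (-(Complex.I*(d:ℂ)*((Θ s r : ℝ):ℂ))))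
                * c d := by
      rw [Finset.sum_congr rfl (fun s (_ : s ∈ Finset.range N) => Finset.sum_comm), Finset.sum_comm]
      apply Finset.sum_congr rfl
      intro d _
      rw [Finset.sum_congr rfl
        (fun s (_ : s ∈ Finset.range N) => (Finset.sum_mul (Finset.range k) _ _).symm),
        ← Finset.sum_mul]
    rw [hswX, hswY]
    -- evaluate each d
    have hU1 : ∀ d ∈ Finset.Icc 1 M,
        (∑ s ∈ Finset.range N, ∑ r ∈ Finset.range k,
          ((W s : ℝ):ℂ)/k * Complex.exp (Complex.I*(d:ℂ)*((Θ s r : ℝ):ℂ)))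
        = if d = k then -(Complex.exp (Complex.I*(φ:ℂ)))/2 else 0 := by
      intro d hd
      rw [Finset.mem_Icc] at hd
      have h := node_sum N k hN hk0 δ φ 1 (Or.inl rfl) d hd.1
        (by rw [hNn2, hn]; exact Nat.div_le_div_right hd.2)
      simp only [Int.cast_one, one_mul] at h
      simp only [hW, hΘ]
      exact h
    have hU2 : ∀ d ∈ Finset.Icc 1 M,
        (∑ s ∈ Finset.range N, ∑ r ∈ Finset.range k,
          ((W s : ℝ):ℂ)/k * Complex.exp (-(Complex.I*(d:ℂ)*((Θ s r : ℝ):ℂ))))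
        = if d = k then -(Complex.exp (-(Complex.I*(φ:ℂ))))/2 else 0 := by
      intro d hd
      rw [Finset.mem_Icc] at hd
      have h := node_sum N k hN hk0 δ φ (-1) (Or.inr rfl) d hd.1
        (by rw [hNn2, hn]; exact Nat.div_le_div_right hd.2)
      simp only [Int.cast_neg, Int.cast_one, neg_mul, one_mul] at h
      simp only [hW, hΘ]
      exact h
    have hX2 : ∑ d ∈ Finset.Icc 1 M, (∑ s ∈ Finset.range N, ∑ r ∈ Finset.range k,
          ((W s : ℝ):ℂ)/k * Complex.exp (Complex.I*(d:ℂ)*((Θ s r : ℝ):ℂ)))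
            * (starRingEnd ℂ) (c d)
        = ∑ d ∈ Finset.Icc 1 M,
            (if d = k then -(Complex.exp (Complex.I*(φ:ℂ)))/2 else 0) * (starRingEnd ℂ) (c d) :=
      Finset.sum_congr rfl (fun d hd => by rw [hU1 d hd])
    have hY2 : ∑ d ∈ Finset.Icc 1 M, (∑ s ∈ Finset.range N, ∑ r ∈ Finset.range k,
          ((W s : ℝ):ℂ)/k * Complex.exp (-(Complex.I*(d:ℂ)*((Θ s r : ℝ):ℂ)))) * c d
        = ∑ d ∈ Finset.Icc 1 M,
            (if d = k then -(Complex.exp (-(Complex.I*(φ:ℂ))))/2 else 0) * c d :=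
      Finset.sum_congr rfl (fun d hd => by rw [hU2 d hd])
    rw [hX2, hY2]
    rw [Finset.sum_eq_single_of_mem k (Finset.mem_Icc.mpr ⟨hk1, hk2⟩)
      (fun d _ hdk => by rw [if_neg hdk, zero_mul]),
      Finset.sum_eq_single_of_mem k (Finset.mem_Icc.mpr ⟨hk1, hk2⟩)
      (fun d _ hdk => by rw [if_neg hdk, zero_mul])]
    rw [if_pos rfl, if_pos rfl]
    linear_combination ((-1:ℂ)/2) * habs2 + ((-1:ℂ)/2) * habs1
  -- real part nonneg
  have hZre : 0 ≤ (∑ s ∈ Finset.range N, ∑ r ∈ Finset.range k,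
      ((W s : ℝ):ℂ)/k * F (Θ s r)).re := by
    rw [Complex.re_sum]
    apply Finset.sum_nonneg
    intro s hs
    rw [Complex.re_sum]
    apply Finset.sum_nonneg
    intro r _
    have : ((W s : ℝ):ℂ)/(k:ℂ) = (((W s / k : ℝ)):ℂ) := by push_cast; ring
    rw [this, Complex.re_ofReal_mul]
    apply mul_nonneg
    · apply div_nonneg (hWpos s (Finset.mem_range.mp hs)) (by positivity)
    · exact hre (Θ s r)
  rw [hZ] at hZre
  have : (((Real.cos (Real.pi/N) : ℝ):ℂ) * c 0 - ((‖c k‖ : ℝ):ℂ)).re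
      = Real.cos (Real.pi/N) * (c 0).re - ‖c k‖ := by
    rw [Complex.sub_re, Complex.re_ofReal_mul, Complex.ofReal_re]
  rw [this] at hZre
  have hNcast : ((N:ℕ):ℝ) = ((M / k : ℕ) : ℝ) + 2 := by
    rw [hNdef]; push_cast; ring
  rw [← hNcast]
  linarith

/-- The (classical) numerical radius of a bounded operator:
`ω(X) = sup_{‖h‖=1} |⟨Xh, h⟩|`. -/
def numRad {H : Type*} [NormedAddCommGroup H] [InnerProductSpace ℂ H]
    (X : H →L[ℂ] H) : ℝ :=
  sSup {x : ℝ | ∃ h : H, ‖h‖ = 1 ∧ x = ‖(inner ℂ (X h) h : ℂ)‖}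

/-- Operator-valued Fejér–Egerváry–Szász inequality: if for every `θ ∈ ℝ` the operator
`∑_{k=1}^{m-1} e^{-ikθ} A_k^* + A_0 + ∑_{k=1}^{m-1} e^{ikθ} A_k` is positive, then for
each `1 ≤ k ≤ m-1`, `ω(A_k) ≤ ‖A_0‖ · cos (π/(⌊(m-1)/k⌋ + 2))`. -/
theorem fejer_egervary_szasz {H : Type*} [NormedAddCommGroup H] [InnerProductSpace ℂ H]
    [CompleteSpace H] {m : ℕ} (hm : 2 ≤ m) (A : ℕ → H →L[ℂ] H)
    (hpos : ∀ θ : ℝ,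
      (∑ k ∈ Finset.Icc 1 (m - 1),
          Complex.exp (-(Complex.I * (k : ℂ) * (θ : ℂ))) • ContinuousLinearMap.adjoint (A k)
        + A 0
        + ∑ k ∈ Finset.Icc 1 (m - 1),
            Complex.exp (Complex.I * (k : ℂ) * (θ : ℂ)) • A k).IsPositive)
    (k : ℕ) (hk1 : 1 ≤ k) (hk2 : k ≤ m - 1) :
    numRad (A k) ≤ ‖A 0‖ * Real.cos (Real.pi / ((((m - 1) / k : ℕ) : ℝ) + 2)) := by
  have hcos0 : 0 ≤ Real.cos (Real.pi / ((((m - 1) / k : ℕ) : ℝ) + 2)) := by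
    apply Real.cos_nonneg_of_mem_Icc
    constructor
    · have : (0:ℝ) ≤ Real.pi / ((((m - 1) / k : ℕ) : ℝ) + 2) := by positivity
      have : (0:ℝ) ≤ Real.pi/2 := by positivity
      nlinarith [Real.pi_pos, (by positivity : (0:ℝ) ≤ ((((m-1)/k : ℕ)):ℝ))]
    · apply div_le_div_of_nonneg_left Real.pi_pos.le (by norm_num)
      nlinarith [(by positivity : (0:ℝ) ≤ ((((m-1)/k : ℕ)):ℝ))]
  apply Real.sSup_le _ (mul_nonneg (norm_nonneg _) hcos0)
  rintro x ⟨h, hh, rfl⟩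
  set c : ℕ → ℂ := fun d => (inner ℂ (A d h) h : ℂ) with hc
  have hre : ∀ θ : ℝ, 0 ≤ (c 0 + ∑ d ∈ Finset.Icc 1 (m-1),
      (Complex.exp (Complex.I*(d:ℂ)*(θ:ℂ)) * (starRingEnd ℂ) (c d)
        + Complex.exp (-(Complex.I*(d:ℂ)*(θ:ℂ))) * c d)).re := by
    intro θ
    have hp := (hpos θ).2 h
    rw [ContinuousLinearMap.reApplyInnerSelf_apply] at hp
    have hconjexp : ∀ d : ℕ, (starRingEnd ℂ) (Complex.exp (-(Complex.I*(d:ℂ)*(θ:ℂ))))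
        = Complex.exp (Complex.I*(d:ℂ)*(θ:ℂ)) := by
      intro d
      rw [← Complex.exp_conj]
      congr 1
      rw [map_neg, map_mul, map_mul, Complex.conj_I, Complex.conj_ofReal, map_natCast]
      ring
    have hconjexp2 : ∀ d : ℕ, (starRingEnd ℂ) (Complex.exp (Complex.I*(d:ℂ)*(θ:ℂ)))
        = Complex.exp (-(Complex.I*(d:ℂ)*(θ:ℂ))) := by
      intro d
      rw [← Complex.exp_conj]
      congr 1
      rw [map_mul, map_mul, Complex.conj_I, Complex.conj_ofReal, map_natCast]
      ring
    have hid : (inner ℂ ((∑ d ∈ Finset.Icc 1 (m - 1),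
          Complex.exp (-(Complex.I * (d : ℂ) * (θ : ℂ))) • ContinuousLinearMap.adjoint (A d)
        + A 0
        + ∑ d ∈ Finset.Icc 1 (m - 1),
            Complex.exp (Complex.I * (d : ℂ) * (θ : ℂ)) • A d) h) h : ℂ)
        = c 0 + ∑ d ∈ Finset.Icc 1 (m-1),
          (Complex.exp (Complex.I*(d:ℂ)*(θ:ℂ)) * (starRingEnd ℂ) (c d)
            + Complex.exp (-(Complex.I*(d:ℂ)*(θ:ℂ))) * c d) := by
      rw [ContinuousLinearMap.add_apply, ContinuousLinearMap.add_apply,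
        inner_add_left, inner_add_left,
        ContinuousLinearMap.sum_apply, ContinuousLinearMap.sum_apply,
        sum_inner, sum_inner]
      have hX : ∀ d ∈ Finset.Icc 1 (m-1),
          (inner ℂ ((Complex.exp (-(Complex.I * (d : ℂ) * (θ : ℂ)))
              • ContinuousLinearMap.adjoint (A d)) h) h : ℂ)
          = Complex.exp (Complex.I*(d:ℂ)*(θ:ℂ)) * (starRingEnd ℂ) (c d) := by
        intro d _
        rw [ContinuousLinearMap.smul_apply, inner_smul_left,
          ContinuousLinearMap.adjoint_inner_left, hconjexp d, ← inner_conj_symm]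
      have hY : ∀ d ∈ Finset.Icc 1 (m-1),
          (inner ℂ ((Complex.exp (Complex.I * (d : ℂ) * (θ : ℂ)) • A d) h) h : ℂ)
          = Complex.exp (-(Complex.I*(d:ℂ)*(θ:ℂ))) * c d := by
        intro d _
        rw [ContinuousLinearMap.smul_apply, inner_smul_left, hconjexp2 d]
      rw [Finset.sum_congr rfl hX, Finset.sum_congr rfl hY, Finset.sum_add_distrib]
      ring
    rw [hid] at hp
    exact hp
  have hmain := scalar_fes (m-1) c hre k hk1 hk2
  have hc0 : (c 0).re ≤ ‖A 0‖ := by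
    have h1 : ‖(c 0 : ℂ)‖ ≤ ‖A 0 h‖ * ‖h‖ := norm_inner_le_norm (𝕜 := ℂ) (A 0 h) h
    have h2 : ‖A 0 h‖ ≤ ‖A 0‖ * ‖h‖ := (A 0).le_opNorm h
    rw [hh] at h1 h2
    have h3 : (c 0).re ≤ ‖(c 0 : ℂ)‖ := Complex.re_le_norm (c 0)
    simpa using le_trans h3 (by nlinarith)
  calc ‖(inner ℂ (A k h) h : ℂ)‖ = ‖c k‖ := by rw [hc]
    _ ≤ (c 0).re * Real.cos (Real.pi / ((((m-1) / k : ℕ) : ℝ) + 2)) := hmain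
    _ ≤ ‖A 0‖ * Real.cos (Real.pi / ((((m-1) / k : ℕ) : ℝ) + 2)) :=
        mul_le_mul_of_nonneg_right hc0 hcos0
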